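/- Let N ≥ 2 be an integer, T > 0 and M > 0. Suppose u : (0,1]×(0,T) → ℝ is positive and C^{2,1} (u, u_r, u_{rr}, u_t continuous on (0,1]×(0,T)), extends continuously to [0,1]×(0,T), satisfies ∫₀¹ u(r,t) r^{N−1} dr = M for all t ∈ (0,T), satisfies for all (r,t) ∈ (0,1)×(0,T) the radial equation u_t = r^{1−N} ∂_r [ r^{N−1} u_r(r,t) + r^{N−1} u(r,t) ( r^{1−N} ∫₀^r u(ρ,t) ρ^{N−1} dρ )^{1/(N−1)} ], and satisfies the no-flux boundary condition u_r(1,t) + u(1,t) (∫₀¹ u(ρ,t) ρ^{N−1} dρ)^{1/(N−1)} = 0 for all t ∈ (0,T). Then U(ξ,t) := ∫₀^{ξ^{1/N}} u(r,t) r^{N−1} dr satisfies U_t = N² ξ^{2−2/N} U_{ξξ} + N ξ^{1−2/N} U^{1/(N−1)} U_ξ for all (ξ,t) ∈ (0,1)×(0,T), together with U(0,t) = 0 and U(1,t) = M for all t ∈ (0,T). -/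

import Mathlib

/-!
Under `ξ = r^N` the Jacobian cancels the weight `r^{N-1}`:
`d/dξ ∫₀^{ξ^{1/N}} g(r) r^{N-1} dr = g(ξ^{1/N})/N`, which gives `U_ξ`, and then `U_ξξ` by the
chain rule.
In time, conservation of mass turns `U_t` into minus the time derivative of the mass outside
the ball of radius `r = ξ^{1/N}`. Differentiating under the integral sign and integrating the
equation from `r` to `1`, where the no-flux condition kills the boundary term, `U_t` is the radial
flux `r^{N-1}(u_r + u (r^{1-N} U)^{1/(N-1)})` at `r`; rewriting powers of `r` as powers of `ξ`
turns it into the right-hand side.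
-/

open Set Filter Topology MeasureTheory Function
open scoped Interval

theorem hasDerivAt_intervalIntegral_of_continuousOn {f f' : ℝ → ℝ → ℝ} {a b t : ℝ}
    {s : Set ℝ} (hab : a ≤ b) (hs : s ∈ 𝓝 t)
    (hf : ∀ τ ∈ s, ContinuousOn (f · τ) (Icc a b))
    (hf' : ContinuousOn (uncurry f') (Icc a b ×ˢ s))
    (hderiv : ∀ ρ ∈ Icc a b, ∀ τ ∈ s, HasDerivAt (f ρ) (f' ρ τ) τ) :
    HasDerivAt (fun τ => ∫ ρ in a..b, f ρ τ) (∫ ρ in a..b, f' ρ t) t := by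
  obtain ⟨ε, hε, hεs⟩ := Metric.nhds_basis_closedBall.mem_iff.1 hs
  obtain ⟨C, hC⟩ :=
    (isCompact_Icc.prod (isCompact_closedBall t ε)).exists_bound_of_continuousOn
      (hf'.mono (prod_mono subset_rfl hεs))
  have hΙ : Ι a b ⊆ Icc a b := by
    rw [uIoc_of_le hab]; exact Ioc_subset_Icc_self
  refine (intervalIntegral.hasDerivAt_integral_of_dominated_loc_of_deriv_le
    (F := fun τ ρ => f ρ τ) (F' := fun τ ρ => f' ρ τ) (bound := fun _ => C)
    (Metric.ball_mem_nhds t hε) ?_ ?_ ?_ ?_ intervalIntegrable_const ?_).2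
  · filter_upwards [hs] with τ hτ
    exact ((hf τ hτ).mono hΙ).aestronglyMeasurable measurableSet_uIoc
  · exact (hf t (mem_of_mem_nhds hs)).intervalIntegrable_of_Icc hab
  · exact ((hf'.uncurry_right t (mem_of_mem_nhds hs)).mono hΙ).aestronglyMeasurable
      measurableSet_uIoc
  · refine ae_of_all _ fun ρ hρ τ hτ => hC (ρ, τ) ⟨hΙ hρ, ?_⟩
    exact Metric.ball_subset_closedBall hτ
  · exact ae_of_all _ fun ρ hρ τ hτ =>
      hderiv ρ (hΙ hρ) τ (hεs (Metric.ball_subset_closedBall hτ))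

theorem rpow_one_div_mem_Ioo {ξ : ℝ} (hξ : ξ ∈ Ioo 0 1) {N : ℕ} (hN : 1 ≤ N) :
    ξ ^ ((1 : ℝ) / N) ∈ Ioo 0 1 :=
  ⟨Real.rpow_pos_of_pos hξ.1 _, Real.rpow_lt_one hξ.1.le hξ.2 (by positivity)⟩

theorem rpow_one_div_pow_pred {ξ : ℝ} (hξ : 0 ≤ ξ) {N : ℕ} (hN : 1 ≤ N) :
    (ξ ^ ((1 : ℝ) / N)) ^ (N - 1) = ξ ^ (1 - (1 : ℝ) / N) := by
  rw [← Real.rpow_natCast, ← Real.rpow_mul hξ, Nat.cast_sub hN]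
  have : (N : ℝ) ≠ 0 := by positivity
  field_simp
  ring_nf

theorem hasDerivAt_integral_rpow_one_div {g : ℝ → ℝ} {N : ℕ} (hN : 1 ≤ N)
    (hg : ContinuousOn g (Icc 0 1)) {ξ : ℝ} (hξ : ξ ∈ Ioo 0 1) :
    HasDerivAt (fun x => ∫ r in (0:ℝ)..x ^ ((1 : ℝ) / N), g r * r ^ (N - 1))
      (g (ξ ^ ((1 : ℝ) / N)) / N) ξ := by
  set r := ξ ^ ((1 : ℝ) / N)
  have hr := rpow_one_div_mem_Ioo hξ hN
  have hgw : ContinuousOn (fun r => g r * r ^ (N - 1)) (Icc 0 1) := hg.mul (continuousOn_pow _)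
  have hprim : HasDerivAt (fun x => ∫ r in (0:ℝ)..x, g r * r ^ (N - 1))
      (g r * r ^ (N - 1)) r :=
    intervalIntegral.integral_hasDerivAt_right
      ((hgw.mono (Icc_subset_Icc le_rfl hr.2.le)).intervalIntegrable_of_Icc hr.1.le)
      ((hgw.mono Ioo_subset_Icc_self).stronglyMeasurableAtFilter isOpen_Ioo r hr)
      (hgw.continuousAt (Icc_mem_nhds hr.1 hr.2))
  refine (hprim.comp ξ (Real.hasDerivAt_rpow_const (p := (1 : ℝ) / N) (Or.inl hξ.1.ne')))
    |>.congr_deriv ?_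
  rw [rpow_one_div_pow_pred hξ.1.le hN]
  have : ξ ^ (1 - (1 : ℝ) / N) * ξ ^ ((1 : ℝ) / N - 1) = 1 := by
    rw [← Real.rpow_add hξ.1]; simp
  linear_combination (g r / N) * this

theorem hasDerivAt_deriv_integral_rpow_one_div {g : ℝ → ℝ} {g' : ℝ} {N : ℕ} (hN : 1 ≤ N)
    (hg : ContinuousOn g (Icc 0 1)) {ξ : ℝ} (hξ : ξ ∈ Ioo 0 1)
    (hg' : HasDerivAt g g' (ξ ^ ((1 : ℝ) / N))) :
    HasDerivAt (deriv fun x => ∫ r in (0:ℝ)..x ^ ((1 : ℝ) / N), g r * r ^ (N - 1))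
      (g' * (1 / N * ξ ^ ((1 : ℝ) / N - 1)) / N) ξ := by
  refine ((hg'.comp ξ (Real.hasDerivAt_rpow_const (Or.inl hξ.1.ne'))).div_const N)
    |>.congr_of_eventuallyEq ?_
  filter_upwards [Ioo_mem_nhds hξ.1 hξ.2] with s hs
    using (hasDerivAt_integral_rpow_one_div hN hg hs).deriv

/-- `r^{N-1}(u_r + u |v_r|^{1/(N-1)})` with `-v_r = r^{1-N} ∫₀^r u ρ^{N-1} dρ`. -/
noncomputable def radialFlux (N : ℕ) (u ur : ℝ → ℝ) (s : ℝ) : ℝ :=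
  s ^ (N - 1) * ur s + s ^ (N - 1) * u s *
    (s ^ ((1 : ℝ) - N) * ∫ ρ in (0:ℝ)..s, u ρ * ρ ^ (N - 1)) ^ ((1 : ℝ) / ((N : ℝ) - 1))

theorem continuousOn_radialFlux {N : ℕ} (hN : 1 ≤ N) {u ur : ℝ → ℝ}
    (hu : ContinuousOn u (Icc 0 1)) (hur : ContinuousOn ur (Ioc 0 1)) :
    ContinuousOn (radialFlux N u ur) (Ioc 0 1) := by
  have hpow : ContinuousOn (fun s : ℝ => s ^ (N - 1)) (Ioc 0 1) := continuousOn_pow _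
  have hmass : ContinuousOn (fun s => ∫ ρ in (0:ℝ)..s, u ρ * ρ ^ (N - 1)) (Ioc 0 1) := by
    refine (intervalIntegral.continuousOn_primitive_interval (b := 1) ?_).mono ?_
    · rw [uIcc_of_le zero_le_one]
      exact (hu.mul (continuousOn_pow _)).integrableOn_compact isCompact_Icc
    · rw [uIcc_of_le zero_le_one]; exact Ioc_subset_Icc_self
  have hexp : (0 : ℝ) ≤ 1 / ((N : ℝ) - 1) := by
    have : (1 : ℝ) ≤ N := by exact_mod_cast hN
    exact one_div_nonneg.2 (by linarith)
  have hv : ContinuousOn (fun s => (s ^ ((1 : ℝ) - N) * ∫ ρ in (0:ℝ)..s, u ρ * ρ ^ (N - 1))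
      ^ ((1 : ℝ) / ((N : ℝ) - 1))) (Ioc 0 1) :=
    ((continuousOn_id.rpow_const fun s hs => Or.inl hs.1.ne').mul hmass).rpow_const
      fun _ _ => Or.inr hexp
  exact (hpow.mul hur).add ((hpow.mul (hu.mono Ioc_subset_Icc_self)).mul hv)

theorem integral_mul_pow_pred_eq_radialFlux_sub {N : ℕ} (hN : 1 ≤ N) {u ur ut : ℝ → ℝ}
    (hu : ContinuousOn u (Icc 0 1)) (hur : ContinuousOn ur (Ioc 0 1))
    (hut : ContinuousOn ut (Ioc 0 1))
    (hflux : ∀ r ∈ Ioo (0:ℝ) 1, HasDerivAt (radialFlux N u ur) (r ^ (N - 1) * ut r) r)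
    {a : ℝ} (ha : a ∈ Ioc 0 1) :
    ∫ ρ in a..1, ut ρ * ρ ^ (N - 1) = radialFlux N u ur 1 - radialFlux N u ur a := by
  have hsub : Icc a 1 ⊆ Ioc 0 1 := Icc_subset_Ioc ha.1 le_rfl
  refine intervalIntegral.integral_eq_sub_of_hasDerivAt_of_le ha.2
    ((continuousOn_radialFlux hN hu hur).mono hsub)
    (fun r hr => (hflux r ⟨ha.1.trans hr.1, hr.2⟩).congr_deriv (mul_comm _ _)) ?_
  exact ((hut.mono hsub).mul (continuousOn_pow _)).intervalIntegrable_of_Icc ha.2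

theorem hasDerivAt_integral_of_integral_eq_const {N : ℕ} {T M : ℝ} {u ut : ℝ → ℝ → ℝ}
    (hu : ∀ τ ∈ Ioo 0 T, ContinuousOn (u · τ) (Icc 0 1))
    (hut : ContinuousOn (uncurry ut) (Ioc 0 1 ×ˢ Ioo 0 T))
    (hderiv : ∀ r ∈ Ioc (0:ℝ) 1, ∀ τ ∈ Ioo 0 T, HasDerivAt (u r) (ut r τ) τ)
    (hmass : ∀ τ ∈ Ioo 0 T, ∫ r in (0:ℝ)..1, u r τ * r ^ (N - 1) = M)
    {a t : ℝ} (ha : a ∈ Ioc 0 1) (ht : t ∈ Ioo 0 T) :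
    HasDerivAt (fun τ => ∫ ρ in (0:ℝ)..a, u ρ τ * ρ ^ (N - 1))
      (-∫ ρ in a..1, ut ρ t * ρ ^ (N - 1)) t := by
  have hsub : Icc a 1 ⊆ Ioc 0 1 := Icc_subset_Ioc ha.1 le_rfl
  have houter := hasDerivAt_intervalIntegral_of_continuousOn ha.2 (Ioo_mem_nhds ht.1 ht.2)
    (f := fun ρ τ => u ρ τ * ρ ^ (N - 1)) (f' := fun ρ τ => ut ρ τ * ρ ^ (N - 1))
    (fun τ hτ => ((hu τ hτ).mono (Icc_subset_Icc ha.1.le le_rfl)).mul (continuousOn_pow _))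
    ((hut.mono (prod_mono hsub subset_rfl)).mul (continuous_fst.pow _).continuousOn)
    (fun ρ hρ τ hτ => (hderiv ρ (hsub hρ) τ hτ).mul_const _)
  refine (houter.const_sub M).congr_of_eventuallyEq ?_
  filter_upwards [Ioo_mem_nhds ht.1 ht.2] with τ hτ
  have hint : ∀ b c, b ∈ Icc (0:ℝ) 1 → c ∈ Icc (0:ℝ) 1 →
      IntervalIntegrable (fun ρ => u ρ τ * ρ ^ (N - 1)) volume b c := fun b c hb hc =>
    (((hu τ hτ).mul (continuousOn_pow _)).mono (uIcc_subset_Icc hb hc)).intervalIntegrable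
  rw [← hmass τ hτ, ← intervalIntegral.integral_add_adjacent_intervals
    (hint 0 a (left_mem_Icc.2 zero_le_one) (Ioc_subset_Icc_self ha))
    (hint a 1 (Ioc_subset_Icc_self ha) (right_mem_Icc.2 zero_le_one))]
  ring

theorem hasDerivAt_integral_eq_radialFlux {N : ℕ} (hN : 1 ≤ N) {T M : ℝ}
    {u ur ut : ℝ → ℝ → ℝ}
    (hu : ∀ τ ∈ Ioo 0 T, ContinuousOn (u · τ) (Icc 0 1))
    (hut : ContinuousOn (uncurry ut) (Ioc 0 1 ×ˢ Ioo 0 T))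
    (hderiv : ∀ r ∈ Ioc (0:ℝ) 1, ∀ τ ∈ Ioo 0 T, HasDerivAt (u r) (ut r τ) τ)
    (hmass : ∀ τ ∈ Ioo 0 T, ∫ r in (0:ℝ)..1, u r τ * r ^ (N - 1) = M)
    {a t : ℝ} (ha : a ∈ Ioc 0 1) (ht : t ∈ Ioo 0 T) (hur : ContinuousOn (ur · t) (Ioc 0 1))
    (hPDE : ∀ r ∈ Ioo (0:ℝ) 1,
      HasDerivAt (radialFlux N (u · t) (ur · t)) (r ^ (N - 1) * ut r t) r)
    (hflux : radialFlux N (u · t) (ur · t) 1 = 0) :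
    HasDerivAt (fun τ => ∫ ρ in (0:ℝ)..a, u ρ τ * ρ ^ (N - 1))
      (radialFlux N (u · t) (ur · t) a) t := by
  have hinner := hasDerivAt_integral_of_integral_eq_const hu hut hderiv hmass ha ht
  rwa [integral_mul_pow_pred_eq_radialFlux_sub hN (hu t ht) hur (hut.uncurry_right t ht) hPDE ha,
    hflux, zero_sub, neg_neg] at hinner

theorem radialFlux_rpow_one_div_eq {N : ℕ} (hN : 2 ≤ N) {u ur : ℝ → ℝ} {ξ : ℝ}
    (hξ : 0 < ξ)
    -- `Real.mul_rpow` fails at negative bases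
    (hmass_nonneg : 0 ≤ ∫ ρ in (0:ℝ)..ξ ^ ((1 : ℝ) / N), u ρ * ρ ^ (N - 1)) :
    radialFlux N u ur (ξ ^ ((1 : ℝ) / N)) =
      (N : ℝ) ^ 2 * ξ ^ ((2 : ℝ) - 2 / N)
          * (ur (ξ ^ ((1 : ℝ) / N)) * (1 / N * ξ ^ ((1 : ℝ) / N - 1)) / N)
        + (N : ℝ) * ξ ^ ((1 : ℝ) - 2 / N)
          * (∫ ρ in (0:ℝ)..ξ ^ ((1 : ℝ) / N), u ρ * ρ ^ (N - 1)) ^ ((1 : ℝ) / ((N : ℝ) - 1))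
          * (u (ξ ^ ((1 : ℝ) / N)) / N) := by
  have hN' : (2 : ℝ) ≤ N := by exact_mod_cast hN
  have hN0 : (N : ℝ) ≠ 0 := by positivity
  have hN1 : (N : ℝ) - 1 ≠ 0 := by linarith
  have hpow :
      (ξ ^ ((1 : ℝ) / N)) ^ (N - 1) = ξ ^ ((2 : ℝ) - 2 / N) * ξ ^ ((1 : ℝ) / N - 1) := by
    rw [rpow_one_div_pow_pred hξ.le (by omega), ← Real.rpow_add hξ]
    ring_nf
  have hrpow : ((ξ ^ ((1 : ℝ) / N)) ^ ((1 : ℝ) - N)) ^ ((1 : ℝ) / ((N : ℝ) - 1))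
      = ξ ^ (-(1 : ℝ) / N) := by
    rw [← Real.rpow_mul hξ.le, ← Real.rpow_mul hξ.le]
    congr 1
    field_simp
    ring
  have hsplit : ξ ^ ((1 : ℝ) - 2 / N) =
      ξ ^ ((2 : ℝ) - 2 / N) * ξ ^ ((1 : ℝ) / N - 1) * ξ ^ (-(1 : ℝ) / N) := by
    rw [← Real.rpow_add hξ, ← Real.rpow_add hξ]
    ring_nf
  rw [radialFlux, Real.mul_rpow (Real.rpow_nonneg (Real.rpow_nonneg hξ.le _) _) hmass_nonneg,
    hrpow, hpow, hsplit]
  field_simp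

theorem accumulated_density_equation_general
    (N : ℕ) (hN : 2 ≤ N)
    (T : ℝ) (M : ℝ)
    (u ur urr ut : ℝ → ℝ → ℝ)
    (hpos : ∀ r ∈ Ioc (0:ℝ) 1, ∀ t ∈ Ioo (0:ℝ) T, 0 < u r t)
    (hC21 : ∀ r ∈ Ioc (0:ℝ) 1, ∀ t ∈ Ioo (0:ℝ) T,
      HasDerivWithinAt (fun s => u s t) (ur r t) (Ioc 0 1) r ∧
      HasDerivWithinAt (fun s => ur s t) (urr r t) (Ioc 0 1) r ∧
      HasDerivAt (fun τ => u r τ) (ut r t) t)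
    (hut_cont : ContinuousOn (fun p : ℝ × ℝ => ut p.1 p.2) (Ioc 0 1 ×ˢ Ioo 0 T))
    (hu_ext : ContinuousOn (fun p : ℝ × ℝ => u p.1 p.2) (Icc 0 1 ×ˢ Ioo 0 T))
    (hmass : ∀ t ∈ Ioo (0:ℝ) T, (∫ r in (0:ℝ)..1, u r t * r ^ (N - 1)) = M)
    (hPDE : ∀ r ∈ Ioo (0:ℝ) 1, ∀ t ∈ Ioo (0:ℝ) T,
      HasDerivAt (fun s : ℝ =>
          s ^ (N - 1) * ur s t + s ^ (N - 1) * u s t *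
            (s ^ ((1 : ℝ) - N) * ∫ ρ in (0:ℝ)..s, u ρ t * ρ ^ (N - 1))
              ^ ((1 : ℝ) / ((N : ℝ) - 1)))
        (r ^ (N - 1) * ut r t) r)
    (hflux : ∀ t ∈ Ioo (0:ℝ) T,
      ur 1 t + u 1 t * (∫ ρ in (0:ℝ)..1, u ρ t * ρ ^ (N - 1))
        ^ ((1 : ℝ) / ((N : ℝ) - 1)) = 0)
    (U : ℝ → ℝ → ℝ)
    (hU : ∀ ξ ∈ Icc (0:ℝ) 1, ∀ t ∈ Ioo (0:ℝ) T,
      U ξ t = ∫ r in (0:ℝ)..(ξ ^ ((1 : ℝ) / N)), u r t * r ^ (N - 1)) :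
    ∀ t ∈ Ioo (0:ℝ) T,
      U 0 t = 0 ∧ U 1 t = M ∧
      ∀ ξ ∈ Ioo (0:ℝ) 1, ∃ Uξ Uξξ : ℝ,
        HasDerivAt (fun s => U s t) Uξ ξ ∧
        HasDerivAt (deriv (fun s => U s t)) Uξξ ξ ∧
        HasDerivAt (fun τ => U ξ τ)
          ((N : ℝ) ^ 2 * ξ ^ ((2 : ℝ) - 2 / N) * Uξξ
            + (N : ℝ) * ξ ^ ((1 : ℝ) - 2 / N) * (U ξ t) ^ ((1 : ℝ) / ((N : ℝ) - 1)) * Uξ) t := by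
  intro t ht
  have hN1 : 1 ≤ N := by omega
  have hu : ∀ τ ∈ Ioo (0:ℝ) T, ContinuousOn (u · τ) (Icc 0 1) := fun τ hτ =>
    hu_ext.uncurry_right (f := u) τ hτ
  refine ⟨?_, ?_, fun ξ hξ => ?_⟩
  · rw [hU 0 (left_mem_Icc.2 zero_le_one) t ht, Real.zero_rpow (by positivity),
      intervalIntegral.integral_same]
  · rw [hU 1 (right_mem_Icc.2 zero_le_one) t ht, Real.one_rpow, hmass t ht]
  set r₀ := ξ ^ ((1 : ℝ) / N)
  have hr₀ : r₀ ∈ Ioo 0 1 := rpow_one_div_mem_Ioo hξ hN1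
  have hUξ : (fun x => U x t) =ᶠ[𝓝 ξ]
      fun x => ∫ r in (0:ℝ)..x ^ ((1 : ℝ) / N), u r t * r ^ (N - 1) :=
    eventually_of_mem (Ioo_mem_nhds hξ.1 hξ.2) fun x hx => hU x (Ioo_subset_Icc_self hx) t ht
  have hUt : (fun τ => U ξ τ) =ᶠ[𝓝 t]
      fun τ => ∫ r in (0:ℝ)..r₀, u r τ * r ^ (N - 1) :=
    eventually_of_mem (Ioo_mem_nhds ht.1 ht.2) fun τ hτ => hU ξ (Ioo_subset_Icc_self hξ) τ hτ
  have hI : 0 ≤ ∫ ρ in (0:ℝ)..r₀, u ρ t * ρ ^ (N - 1) := by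
    rw [intervalIntegral.integral_of_le hr₀.1.le]
    exact setIntegral_nonneg measurableSet_Ioc fun ρ hρ =>
      mul_nonneg (hpos ρ ⟨hρ.1, hρ.2.trans hr₀.2.le⟩ t ht).le (pow_nonneg hρ.1.le _)
  have hur : ContinuousOn (ur · t) (Ioc 0 1) := fun r hr =>
    (hC21 r hr t ht).2.1.continuousWithinAt
  have hu_r := (hC21 r₀ (Ioo_subset_Ioc_self hr₀) t ht).1.hasDerivAt
    (Ioc_mem_nhds hr₀.1 hr₀.2)
  refine ⟨_, _, (hasDerivAt_integral_rpow_one_div hN1 (hu t ht) hξ).congr_of_eventuallyEq hUξ,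
    (hasDerivAt_deriv_integral_rpow_one_div hN1 (hu t ht) hξ hu_r).congr_of_eventuallyEq
      hUξ.deriv, ?_⟩
  rw [hU ξ (Ioo_subset_Icc_self hξ) t ht]
  refine (hasDerivAt_integral_eq_radialFlux hN1 hu hut_cont
    (fun r hr τ hτ => (hC21 r hr τ hτ).2.2) hmass (Ioo_subset_Ioc_self hr₀) ht hur
    (hPDE · · t ht) ?_).congr_of_eventuallyEq hUt
    |>.congr_deriv (radialFlux_rpow_one_div_eq hN hξ.1 hI)
  simpa only [radialFlux, one_pow, Real.one_rpow, one_mul] using hflux t ht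

/-- **From the radial chemotaxis system to the accumulated-density equation.**
If `u > 0` is a `C^{2,1}` radial solution of
`u_t = r^{1−N} ∂_r[r^{N−1}u_r + r^{N−1}u (r^{1−N}∫₀^r u ρ^{N−1}dρ)^{1/(N−1)}]`
on `(0,1)×(0,T)` with total mass `M` and no-flux boundary condition at `r = 1`, then
`U(ξ,t) = ∫₀^{ξ^{1/N}} u r^{N−1} dr` solves
`U_t = N² ξ^{2−2/N} U_{ξξ} + N ξ^{1−2/N} U^{1/(N−1)} U_ξ` on `(0,1)×(0,T)` with
`U(0,t) = 0`, `U(1,t) = M`. -/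
theorem accumulated_density_equation
    (N : ℕ) (hN : 2 ≤ N)
    (T : ℝ) (hT : 0 < T) (M : ℝ) (hM : 0 < M)
    (u ur urr ut : ℝ → ℝ → ℝ)
    (hpos : ∀ r ∈ Ioc (0:ℝ) 1, ∀ t ∈ Ioo (0:ℝ) T, 0 < u r t)
    (hC21 : ∀ r ∈ Ioc (0:ℝ) 1, ∀ t ∈ Ioo (0:ℝ) T,
      HasDerivWithinAt (fun s => u s t) (ur r t) (Ioc 0 1) r ∧
      HasDerivWithinAt (fun s => ur s t) (urr r t) (Ioc 0 1) r ∧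
      HasDerivAt (fun τ => u r τ) (ut r t) t)
    (hu_cont : ContinuousOn (fun p : ℝ × ℝ => u p.1 p.2) (Ioc 0 1 ×ˢ Ioo 0 T))
    (hur_cont : ContinuousOn (fun p : ℝ × ℝ => ur p.1 p.2) (Ioc 0 1 ×ˢ Ioo 0 T))
    (hurr_cont : ContinuousOn (fun p : ℝ × ℝ => urr p.1 p.2) (Ioc 0 1 ×ˢ Ioo 0 T))
    (hut_cont : ContinuousOn (fun p : ℝ × ℝ => ut p.1 p.2) (Ioc 0 1 ×ˢ Ioo 0 T))
    (hu_ext : ContinuousOn (fun p : ℝ × ℝ => u p.1 p.2) (Icc 0 1 ×ˢ Ioo 0 T))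
    (hmass : ∀ t ∈ Ioo (0:ℝ) T, (∫ r in (0:ℝ)..1, u r t * r ^ (N - 1)) = M)
    (hPDE : ∀ r ∈ Ioo (0:ℝ) 1, ∀ t ∈ Ioo (0:ℝ) T,
      HasDerivAt (fun s : ℝ =>
          s ^ (N - 1) * ur s t + s ^ (N - 1) * u s t *
            (s ^ ((1 : ℝ) - N) * ∫ ρ in (0:ℝ)..s, u ρ t * ρ ^ (N - 1))
              ^ ((1 : ℝ) / ((N : ℝ) - 1)))
        (r ^ (N - 1) * ut r t) r)
    (hflux : ∀ t ∈ Ioo (0:ℝ) T,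
      ur 1 t + u 1 t * (∫ ρ in (0:ℝ)..1, u ρ t * ρ ^ (N - 1))
        ^ ((1 : ℝ) / ((N : ℝ) - 1)) = 0)
    (U : ℝ → ℝ → ℝ)
    (hU : ∀ ξ ∈ Icc (0:ℝ) 1, ∀ t ∈ Ioo (0:ℝ) T,
      U ξ t = ∫ r in (0:ℝ)..(ξ ^ ((1 : ℝ) / N)), u r t * r ^ (N - 1)) :
    ∀ t ∈ Ioo (0:ℝ) T,
      U 0 t = 0 ∧ U 1 t = M ∧
      ∀ ξ ∈ Ioo (0:ℝ) 1, ∃ Uξ Uξξ : ℝ,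
        HasDerivAt (fun s => U s t) Uξ ξ ∧
        HasDerivAt (deriv (fun s => U s t)) Uξξ ξ ∧
        HasDerivAt (fun τ => U ξ τ)
          ((N : ℝ) ^ 2 * ξ ^ ((2 : ℝ) - 2 / N) * Uξξ
            + (N : ℝ) * ξ ^ ((1 : ℝ) - 2 / N) * (U ξ t) ^ ((1 : ℝ) / ((N : ℝ) - 1)) * Uξ) t :=
  accumulated_density_equation_general N hN T M u ur urr ut hpos hC21 hut_cont hu_ext hmass hPDE
    hflux U hU
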